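/- Let π be uniformly random in S_n with n ≥ T+1, and let C_1, ..., C_T ⊆ [n] be fixed sets of size s each (chosen independently of π). Let E be the event that π^t(1) ∈ C_t for all t = 1,...,T. Then Pr[E] ≤ (s/(n−T))^T + 2T³/n. -/

import Mathlib

/-!
Let `p` be the length of the cycle of `π` through `z`. If `p ≥ T`, the points
`z, π z, …, π^(T-1) z` are distinct and `π` maps each to the next, so each trajectory
`(π z, …, π^T z) ∈ C₁ × ⋯ × C_T` is realised by at most `(n - T)!` permutations: at most
`s^T (n - T)!` permutations in total. If `1 ≤ p < T`, there are `(n - 1)⋯(n - p + 1)` choices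
for the cycle `z, π z, …, π^(p-1) z` and at most `(n - p)!` for the rest of `π`, so at most
`(n - 1)!` permutations for each `p`. Dividing by `n!` and using `(n - T)^T (n - T)! ≤ n!`
gives the bound `(s / (n - T))^T + T / n`.
-/

open Finset Function Nat

lemma Nat.sub_pow_mul_factorial_sub_le (n T : ℕ) : (n - T) ^ T * (n - T)! ≤ n ! := by
  rcases le_or_gt T n with hT | hT
  · calc (n - T) ^ T * (n - T)! ≤ n.descFactorial T * (n - T)! := by
          gcongr
          exact (Nat.pow_le_pow_left (by omega) T).trans (pow_sub_le_descFactorial n T)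
      _ = n ! := by rw [mul_comm, factorial_mul_descFactorial hT]
  · simp [Nat.sub_eq_zero_of_le hT.le, zero_pow (by omega : T ≠ 0)]

namespace Equiv.Perm

section

variable {β : Type*}

def orbitPrefix (π : Perm β) (z : β) (m : ℕ) : Fin (m + 1) → β :=
  fun i => (π ^ (i : ℕ)) z

lemma orbitPrefix_succ (π : Perm β) (z : β) {m : ℕ} (i : Fin m) :
    orbitPrefix π z m i.succ = π (orbitPrefix π z m i.castSucc) := by
  simp only [orbitPrefix, Fin.val_succ, Fin.val_castSucc, _root_.pow_succ', Perm.mul_apply]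

lemma pow_minimalPeriod_apply (π : Perm β) (z : β) :
    (π ^ minimalPeriod π z) z = z := by
  rw [← iterate_eq_pow]
  exact isPeriodicPt_minimalPeriod π z

lemma injOn_pow_apply_Iio_minimalPeriod (π : Perm β) (z : β) :
    Set.InjOn (fun i : ℕ => (π ^ i) z) (Set.Iio (minimalPeriod π z)) := by
  simpa only [← iterate_eq_pow] using iterate_injOn_Iio_minimalPeriod

lemma injective_pow_apply_of_le_minimalPeriod {π : Perm β} {z : β} {m : ℕ}
    (h : m ≤ minimalPeriod π z) : Injective (fun i : Fin m => (π ^ (i : ℕ)) z) :=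
  fun i j hij => Fin.ext <|
    injOn_pow_apply_Iio_minimalPeriod π z (i.2.trans_le h) (j.2.trans_le h) hij

end

variable {α : Type*} [Fintype α] [DecidableEq α]

lemma card_filter_forall_apply_eq_self {m : ℕ} (a : Fin m → α) (ha : Injective a) :
    #{σ : Perm α | ∀ i, σ (a i) = a i} = (Fintype.card α - m)! := by
  set A := univ.image a
  have hA : Fintype.card A = m := by
    rw [Fintype.card_coe, card_image_of_injective _ ha, Finset.card_univ, Fintype.card_fin]
  have hcompl : Fintype.card {x // x ∉ A} = Fintype.card α - m := by
    rw [Fintype.card_subtype_compl, ← hA]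
  rw [← Fintype.card_subtype, ← hcompl, ← Fintype.card_perm]
  refine (Fintype.card_congr ((Perm.subtypeEquivSubtypePerm (· ∉ A)).trans
    (Equiv.subtypeEquivRight fun σ => ?_))).symm
  simp [A]

lemma card_filter_forall_apply_eq_le {m : ℕ} (a b : Fin m → α) (ha : Injective a) :
    #{π : Perm α | ∀ i, π (a i) = b i} ≤ (Fintype.card α - m)! := by
  rcases eq_empty_or_nonempty {π : Perm α | ∀ i, π (a i) = b i} with h | ⟨π₀, hπ₀⟩
  · simp [h]
  rw [← card_filter_forall_apply_eq_self a ha]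
  refine card_le_card_of_injOn (π₀⁻¹ * ·) (fun π hπ => ?_) (mul_right_injective _).injOn
  simp only [coe_filter, mem_filter, mem_univ, true_and, Set.mem_ofPred_eq] at hπ₀ hπ ⊢
  intro i
  rw [Perm.mul_apply, hπ, ← hπ₀]
  exact π₀.symm_apply_apply _

lemma card_filter_orbitPrefix_mem_le (z : α) (m : ℕ) (W : Finset (Fin (m + 1) → α))
    (hW : ∀ x ∈ W, Injective (x ∘ Fin.castSucc)) :
    #{π : Perm α | orbitPrefix π z m ∈ W} ≤ (Fintype.card α - m)! * #W := by
  refine card_le_mul_card_image_of_maps_to (fun π hπ => (mem_filter.1 hπ).2) _ fun x hx => ?_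
  calc #{π ∈ {π : Perm α | orbitPrefix π z m ∈ W} | orbitPrefix π z m = x}
      ≤ #{π : Perm α | ∀ i, π (x (Fin.castSucc i)) = x i.succ} := by
        refine card_le_card fun π hπ => ?_
        simp only [mem_filter, mem_univ, true_and] at hπ ⊢
        intro i
        rw [← hπ.2, orbitPrefix_succ]
    _ ≤ (Fintype.card α - m)! := card_filter_forall_apply_eq_le _ _ (hW x hx)

lemma card_filter_minimalPeriod_eq_le (z : α) {k : ℕ} (hk : k < Fintype.card α) :
    #{π : Perm α | minimalPeriod π z = k + 1} ≤ (Fintype.card α - 1)! := by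
  set W : Finset (Fin (k + 1 + 1) → α) := (univ : Finset (Fin k ↪ {x // x ≠ z})).image
    fun e => Fin.snoc (Fin.cons z fun i => (e i : α)) z
  have hW : ∀ x ∈ W, Injective (x ∘ Fin.castSucc) := by
    intro x hx
    obtain ⟨e, -, rfl⟩ := mem_image.1 hx
    rw [Fin.snoc_comp_castSucc, Fin.cons_injective_iff]
    exact ⟨fun ⟨i, hi⟩ => (e i).2 hi, Subtype.val_injective.comp e.injective⟩
  have hsub : ({π | minimalPeriod π z = k + 1} : Finset (Perm α)) ⊆
      ({π | orbitPrefix π z (k + 1) ∈ W} : Finset (Perm α)) := by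
    intro π hπ
    simp only [mem_filter, mem_univ, true_and] at hπ ⊢
    have hinj := injOn_pow_apply_Iio_minimalPeriod π z
    rw [hπ] at hinj
    let e : Fin k ↪ {x // x ≠ z} :=
      ⟨fun i => ⟨(π ^ ((i : ℕ) + 1)) z, fun h => by
          have := @hinj ((i : ℕ) + 1) (by simp) 0 (by simp) (by simpa using h)
          omega⟩,
        fun i j hij => Fin.ext <| by
          have := @hinj ((i : ℕ) + 1) (by simp) ((j : ℕ) + 1) (by simp)
            (congrArg Subtype.val hij)
          omega⟩
    refine mem_image.2 ⟨e, mem_univ _, funext fun j => ?_⟩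
    refine Fin.lastCases ?_ (fun j => ?_) j
    · simp [orbitPrefix, ← hπ, pow_minimalPeriod_apply]
    · rw [Fin.snoc_castSucc]
      refine Fin.cases ?_ (fun i => ?_) j
      · simp [orbitPrefix]
      · rfl
  calc #{π : Perm α | minimalPeriod π z = k + 1}
      ≤ #{π | orbitPrefix π z (k + 1) ∈ W} := card_le_card hsub
    _ ≤ (Fintype.card α - (k + 1))! * #W := card_filter_orbitPrefix_mem_le z (k + 1) W hW
    _ ≤ (Fintype.card α - 1 - k)! * (Fintype.card α - 1).descFactorial k := by
        rw [Nat.sub_sub, add_comm 1 k]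
        gcongr
        refine card_image_le.trans ?_
        simp [Fintype.card_embedding_eq]
    _ = (Fintype.card α - 1)! := factorial_mul_descFactorial (by omega)

theorem card_filter_forall_pow_apply_mem_le (z : α) {T s : ℕ} (hT : T < Fintype.card α)
    (C : ℕ → Finset α) (hC : ∀ t, #(C t) ≤ s) :
    #{π : Perm α | ∀ t ∈ Icc 1 T, (π ^ t) z ∈ C t} ≤
      (Fintype.card α - T)! * s ^ T + T * (Fintype.card α - 1)! := by
  set good : Finset (Fin (T + 1) → α) :=
    {x ∈ Fintype.piFinset (Fin.cons {z} fun i : Fin T => C (i + 1)) |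
      Injective (x ∘ Fin.castSucc)}
  have hgood : #good ≤ s ^ T := by
    refine (card_filter_le _ _).trans ?_
    rw [Fintype.card_piFinset, Fin.prod_univ_succ, Fin.cons_zero, card_singleton, one_mul]
    simpa using prod_le_pow_card univ (fun i : Fin T => #(C (i + 1))) s fun i _ => hC _
  have hsplit : ({π | ∀ t ∈ Icc 1 T, (π ^ t) z ∈ C t} : Finset (Perm α)) ⊆
      ({π | orbitPrefix π z T ∈ good} : Finset (Perm α)) ∪
        (range T).biUnion fun k => {π | minimalPeriod π z = k + 1} := by
    intro π hπ
    simp only [mem_filter, mem_univ, true_and, mem_Icc] at hπ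
    by_cases hp : T ≤ minimalPeriod π z
    · refine mem_union_left _ (mem_filter.2 ⟨mem_univ _, mem_filter.2 ⟨?_, ?_⟩⟩)
      · refine Fintype.mem_piFinset.2 fun j => Fin.cases ?_ (fun i => ?_) j
        · simp [orbitPrefix]
        · simpa [orbitPrefix] using hπ (i + 1) ⟨by omega, by omega⟩
      · exact injective_pow_apply_of_le_minimalPeriod hp
    · have hpos := minimalPeriod_pos_of_mem_periodicPts (π.injective.mem_periodicPts z)
      refine mem_union_right _ (mem_biUnion.2 ⟨minimalPeriod π z - 1, by simp; omega, ?_⟩)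
      simp only [mem_filter, mem_univ, true_and]
      omega
  calc #{π : Perm α | ∀ t ∈ Icc 1 T, (π ^ t) z ∈ C t}
      ≤ #{π | orbitPrefix π z T ∈ good} +
          #((range T).biUnion fun k => {π : Perm α | minimalPeriod π z = k + 1}) :=
        (card_le_card hsplit).trans (card_union_le _ _)
    _ ≤ (Fintype.card α - T)! * s ^ T + ∑ _k ∈ range T, (Fintype.card α - 1)! := by
        gcongr
        · exact (card_filter_orbitPrefix_mem_le z T good fun x hx => (mem_filter.1 hx).2).trans
            (by gcongr)
        · exact card_biUnion_le.trans
            (sum_le_sum fun k hk => card_filter_minimalPeriod_eq_le z (by simp at hk; omega))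
    _ = (Fintype.card α - T)! * s ^ T + T * (Fintype.card α - 1)! := by simp

end Equiv.Perm

lemma factorial_sub_mul_pow_add_div_factorial_le {n T : ℕ} (s : ℕ) (hT : T < n) :
    (((n - T)! * s ^ T + T * (n - 1)! : ℕ) : ℝ) / n ! ≤
      ((s : ℝ) / ((n : ℝ) - T)) ^ T + 2 * (T : ℝ) ^ 3 / n := by
  have hn : (0 : ℝ) < n := by exact_mod_cast (Nat.zero_le T).trans_lt hT
  have hnT : (0 : ℝ) < (n : ℝ) - T := by rw [sub_pos]; exact_mod_cast hT
  have hfact : (n ! : ℝ) = n * (n - 1)! := by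
    exact_mod_cast (mul_factorial_pred (by omega : n ≠ 0)).symm
  have hpow : ((n : ℝ) - T) ^ T * (n - T)! ≤ n ! := by
    rw [← Nat.cast_sub hT.le]
    exact_mod_cast Nat.sub_pow_mul_factorial_sub_le n T
  have hT3 : (T : ℝ) ≤ 2 * T ^ 3 := by
    exact_mod_cast (Nat.le_self_pow (by norm_num) T).trans (Nat.le_mul_of_pos_left _ two_pos)
  calc (((n - T)! * s ^ T + T * (n - 1)! : ℕ) : ℝ) / n !
      = ((n - T)! : ℝ) * s ^ T / n ! + T / n := by
        rw [hfact]; push_cast; field_simp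
    _ ≤ ((s : ℝ) / ((n : ℝ) - T)) ^ T + 2 * (T : ℝ) ^ 3 / n := by
        gcongr
        rw [div_pow, div_le_div_iff₀ (by positivity) (by positivity), hfact]
        rw [hfact] at hpow
        calc ((n - T)! : ℝ) * s ^ T * ((n : ℝ) - T) ^ T
            = s ^ T * (((n : ℝ) - T) ^ T * (n - T)!) := by ring
          _ ≤ s ^ T * (n * (n - 1)!) := by gcongr

/-- Oblivious-cache bound: for fixed caches `C₁,...,C_T` of size `s`, the
probability (over uniform `π`) that `π^t(1) ∈ C_t` for all `t = 1,...,T` is at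
most `(s/(n−T))^T + 2T³/n`. -/
theorem stmt_8 (n T s : ℕ) (hn : T + 1 ≤ n) (hn0 : 0 < n)
    (C : ℕ → Finset (Fin n)) (hC : ∀ t, (C t).card = s) :
    (((Finset.univ : Finset (Equiv.Perm (Fin n))).filter
      (fun π : Equiv.Perm (Fin n) => ∀ t ∈ Finset.Icc 1 T, (π ^ t) (⟨0, hn0⟩ : Fin n) ∈ C t)).card : ℝ)
      / (Nat.factorial n : ℝ)
      ≤ ((s : ℝ) / ((n : ℝ) - T)) ^ T + 2 * (T : ℝ) ^ 3 / n := by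
  have hcount := Equiv.Perm.card_filter_forall_pow_apply_mem_le (⟨0, hn0⟩ : Fin n) (T := T)
    (by rwa [Fintype.card_fin]) C fun t => (hC t).le
  rw [Fintype.card_fin] at hcount
  calc _ ≤ (((n - T)! * s ^ T + T * (n - 1)! : ℕ) : ℝ) / n ! := by gcongr
    _ ≤ _ := factorial_sub_mul_pow_add_div_factorial_le s hn
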